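/- Let (X, ℬ, μ) be a probability space and let α₀, α₁ : X × X → [0,1] and Q : X → [0,∞) be measurable with ∫ Q dμ = 1. Define the coupled kernel's 'both-accept' part by P(θ₀,θ₁; B) ≥ ∫_X min(α₀(θ₀,z), α₁(θ₁,z)) Q(z) 1_{(z,z) ∈ B} dμ(z) for B ⊆ X × X measurable. Suppose there exist constants ε, ε′, ε″ > 0 and a set K ⊆ X such that Q(z) ≥ ε, π₀(z) ≥ ε′, π₁(z) ≥ ε″ for all z ∈ K, where α_j(θ,z) = min(1, Q(θ)π_j(z)/(Q(z)π_j(θ))) with π_j > 0 everywhere. Then for every (θ₀,θ₁) ∈ X × X and every measurable B, P(θ₀,θ₁; B) ≥ c(θ₀,θ₁) · μ({z ∈ K : (z,z) ∈ B}), where c(θ₀,θ₁) := min( ε, ε′ Q(θ₀)/π₀(θ₀), ε″ Q(θ₁)/π₁(θ₁) ) > 0. -/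

import Mathlib

open MeasureTheory

/-!
Multiplying an independence Metropolis–Hastings acceptance ratio by `Q z` cancels the proposal
density of the target point, so the both-accept density is
`min (Q z) (Q θ₀ π₀ z / π₀ θ₀) (Q θ₁ π₁ z / π₁ θ₁)`, which on `K` is at least `c(θ₀, θ₁)`.
It is dominated by the integrable `Q`, so Markov's inequality, applied to the superlevel set
`{c ≤ density}` containing `K ∩ {z | (z, z) ∈ B}`, turns this pointwise bound into
`c · μ(K ∩ {z | (z, z) ∈ B})`.
-/

/-- Acceptance probability of the independence Metropolis–Hastings move `θ → z`. -/
noncomputable def imhAcceptance {X : Type*} (Q π : X → ℝ) (θ z : X) : ℝ :=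
  min 1 (Q θ * π z / (Q z * π θ))

noncomputable def bothAcceptDensity {X : Type*} (Q π₀ π₁ : X → ℝ) (θ₀ θ₁ z : X) : ℝ :=
  min (imhAcceptance Q π₀ θ₀ z) (imhAcceptance Q π₁ θ₁ z) * Q z

section Acceptance

variable {X : Type*} {Q π π₀ π₁ : X → ℝ}

lemma imhAcceptance_nonneg (hQ : ∀ z, 0 ≤ Q z) (hπ : ∀ z, 0 ≤ π z) (θ z : X) :
    0 ≤ imhAcceptance Q π θ z :=
  le_min zero_le_one (div_nonneg (mul_nonneg (hQ θ) (hπ z)) (mul_nonneg (hQ z) (hπ θ)))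

lemma imhAcceptance_le_one (θ z : X) : imhAcceptance Q π θ z ≤ 1 :=
  min_le_left _ _

lemma imhAcceptance_mul_self {θ z : X} (hQz : 0 < Q z) :
    imhAcceptance Q π θ z * Q z = min (Q z) (Q θ * π z / π θ) := by
  rw [imhAcceptance, min_mul_of_nonneg _ _ hQz.le, one_mul, div_mul_eq_mul_div,
    mul_comm (Q θ * π z), mul_div_mul_left _ _ hQz.ne']

lemma le_imhAcceptance_mul_self {θ z : X} {ε ε' : ℝ} (hQθ : 0 ≤ Q θ) (hπθ : 0 ≤ π θ)
    (hQz : ε ≤ Q z) (hπz : ε' ≤ π z) (hε : 0 < ε) :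
    min ε (ε' * Q θ / π θ) ≤ imhAcceptance Q π θ z * Q z := by
  rw [imhAcceptance_mul_self (hε.trans_le hQz)]
  refine min_le_min hQz (div_le_div_of_nonneg_right ?_ hπθ)
  rw [mul_comm]
  exact mul_le_mul_of_nonneg_left hπz hQθ

lemma aemeasurable_imhAcceptance [MeasurableSpace X] {μ : Measure X} (hQ : AEMeasurable Q μ)
    (hπ : Measurable π) (θ : X) : AEMeasurable (imhAcceptance Q π θ) μ :=
  aemeasurable_const.min <|
    (aemeasurable_const.mul hπ.aemeasurable).div (hQ.mul aemeasurable_const)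

lemma bothAcceptDensity_nonneg (hQ : ∀ z, 0 ≤ Q z) (hπ₀ : ∀ z, 0 ≤ π₀ z) (hπ₁ : ∀ z, 0 ≤ π₁ z)
    (θ₀ θ₁ z : X) : 0 ≤ bothAcceptDensity Q π₀ π₁ θ₀ θ₁ z :=
  mul_nonneg (le_min (imhAcceptance_nonneg hQ hπ₀ θ₀ z) (imhAcceptance_nonneg hQ hπ₁ θ₁ z)) (hQ z)

lemma bothAcceptDensity_le (hQ : ∀ z, 0 ≤ Q z) (θ₀ θ₁ z : X) :
    bothAcceptDensity Q π₀ π₁ θ₀ θ₁ z ≤ Q z :=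
  mul_le_of_le_one_left (hQ z) ((min_le_left _ _).trans (imhAcceptance_le_one θ₀ z))

lemma le_bothAcceptDensity {θ₀ θ₁ z : X} {ε ε' ε'' : ℝ} (hQθ₀ : 0 ≤ Q θ₀) (hQθ₁ : 0 ≤ Q θ₁)
    (hπθ₀ : 0 ≤ π₀ θ₀) (hπθ₁ : 0 ≤ π₁ θ₁) (hε : 0 < ε)
    (hQz : ε ≤ Q z) (hπ₀z : ε' ≤ π₀ z) (hπ₁z : ε'' ≤ π₁ z) :
    min ε (min (ε' * Q θ₀ / π₀ θ₀) (ε'' * Q θ₁ / π₁ θ₁)) ≤ bothAcceptDensity Q π₀ π₁ θ₀ θ₁ z := by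
  rw [bothAcceptDensity, min_mul_of_nonneg _ _ (hε.trans_le hQz).le]
  exact le_min
    ((min_le_min_left ε (min_le_left _ _)).trans
      (le_imhAcceptance_mul_self hQθ₀ hπθ₀ hQz hπ₀z hε))
    ((min_le_min_left ε (min_le_right _ _)).trans
      (le_imhAcceptance_mul_self hQθ₁ hπθ₁ hQz hπ₁z hε))

lemma integrable_bothAcceptDensity [MeasurableSpace X] {μ : Measure X} (hQi : Integrable Q μ)
    (hQ : ∀ z, 0 ≤ Q z) (hπ₀ : ∀ z, 0 ≤ π₀ z) (hπ₁ : ∀ z, 0 ≤ π₁ z)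
    (hπ₀m : Measurable π₀) (hπ₁m : Measurable π₁) (θ₀ θ₁ : X) :
    Integrable (bothAcceptDensity Q π₀ π₁ θ₀ θ₁) μ := by
  refine hQi.mono' ?_ (.of_forall fun z => ?_)
  · exact (((aemeasurable_imhAcceptance hQi.aemeasurable hπ₀m θ₀).min
      (aemeasurable_imhAcceptance hQi.aemeasurable hπ₁m θ₁)).mul
        hQi.aemeasurable).aestronglyMeasurable
  · rw [Real.norm_of_nonneg (bothAcceptDensity_nonneg hQ hπ₀ hπ₁ θ₀ θ₁ z)]
    exact bothAcceptDensity_le hQ θ₀ θ₁ z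

end Acceptance

lemma mul_measureReal_le_integral_of_forall_le {X : Type*} [MeasurableSpace X] {μ : Measure X}
    {f : X → ℝ} {s : Set X} {c : ℝ} (hf_nonneg : 0 ≤ᵐ[μ] f) (hf : Integrable f μ)
    (hs : ∀ x ∈ s, c ≤ f x) : c * μ.real s ≤ ∫ x, f x ∂μ := by
  rcases le_or_gt c 0 with hc | hc
  · exact (mul_nonpos_of_nonpos_of_nonneg hc measureReal_nonneg).trans
      (integral_nonneg_of_ae hf_nonneg)
  calc c * μ.real s ≤ c * μ.real {x | c ≤ f x} :=
        mul_le_mul_of_nonneg_left (measureReal_mono hs (hf.measure_ge_lt_top hc).ne) hc.le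
    _ ≤ ∫ x, f x ∂μ := mul_meas_ge_le_integral_of_nonneg hf_nonneg hf c

theorem coupled_kernel_irreducibility_bound_general {X : Type*} [MeasurableSpace X]
    (μ : Measure X)
    (Q π₀ π₁ : X → ℝ) (hπ₀meas : Measurable π₀)
    (hπ₁meas : Measurable π₁)
    (hQpos : ∀ z, 0 < Q z) (hπ₀pos : ∀ z, 0 < π₀ z) (hπ₁pos : ∀ z, 0 < π₁ z)
    (hQint : ∫ z, Q z ∂μ = 1)
    (P : X → X → Set (X × X) → ℝ)
    (hP : ∀ (θ₀ θ₁ : X) (B : Set (X × X)), MeasurableSet B →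
      P θ₀ θ₁ B ≥ ∫ z,
        min (min 1 ((Q θ₀ * π₀ z) / (Q z * π₀ θ₀)))
            (min 1 ((Q θ₁ * π₁ z) / (Q z * π₁ θ₁))) * Q z
          * Set.indicator {z : X | (z, z) ∈ B} (fun _ => (1:ℝ)) z ∂μ)
    (ε ε' ε'' : ℝ) (hε : 0 < ε) (hε' : 0 < ε') (hε'' : 0 < ε'')
    (K : Set X)
    (hQK : ∀ z ∈ K, ε ≤ Q z) (hπ₀K : ∀ z ∈ K, ε' ≤ π₀ z) (hπ₁K : ∀ z ∈ K, ε'' ≤ π₁ z) :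
    ∀ (θ₀ θ₁ : X) (B : Set (X × X)), MeasurableSet B →
      0 < min ε (min (ε' * Q θ₀ / π₀ θ₀) (ε'' * Q θ₁ / π₁ θ₁)) ∧
      P θ₀ θ₁ B ≥ min ε (min (ε' * Q θ₀ / π₀ θ₀) (ε'' * Q θ₁ / π₁ θ₁))
        * (μ (K ∩ {z : X | (z, z) ∈ B})).toReal := by
  intro θ₀ θ₁ B hB
  have hQ z := (hQpos z).le
  have hπ₀ z := (hπ₀pos z).le
  have hπ₁ z := (hπ₁pos z).le
  refine ⟨lt_min hε (lt_min (div_pos (mul_pos hε' (hQpos θ₀)) (hπ₀pos θ₀))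
    (div_pos (mul_pos hε'' (hQpos θ₁)) (hπ₁pos θ₁))), ?_⟩
  set S : Set X := {z | (z, z) ∈ B}
  have hS : MeasurableSet S := measurable_id.prodMk measurable_id hB
  set f : X → ℝ := fun z => bothAcceptDensity Q π₀ π₁ θ₀ θ₁ z * S.indicator (fun _ => 1) z
  have hf_nonneg : 0 ≤ᵐ[μ] f := .of_forall fun z =>
    mul_nonneg (bothAcceptDensity_nonneg hQ hπ₀ hπ₁ θ₀ θ₁ z)
      (Set.indicator_nonneg (fun _ _ => zero_le_one) z)
  have hf_int : Integrable f μ := by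
    simpa only [f, ← Set.indicator_mul_right, mul_one] using
      (integrable_bothAcceptDensity (.of_integral_ne_zero (by simp [hQint])) hQ hπ₀ hπ₁
        hπ₀meas hπ₁meas θ₀ θ₁).indicator hS
  have hf_ge : ∀ z ∈ K ∩ S, min ε (min (ε' * Q θ₀ / π₀ θ₀) (ε'' * Q θ₁ / π₁ θ₁)) ≤ f z := by
    rintro z ⟨hzK, hzS⟩
    simpa only [f, Set.indicator_of_mem hzS, mul_one] using le_bothAcceptDensity (hQ θ₀)
      (hQ θ₁) (hπ₀ θ₀) (hπ₁ θ₁) hε (hQK z hzK) (hπ₀K z hzK) (hπ₁K z hzK)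
  calc P θ₀ θ₁ B ≥ ∫ z, f z ∂μ := hP θ₀ θ₁ B hB
    _ ≥ _ := mul_measureReal_le_integral_of_forall_le hf_nonneg hf_int hf_ge

/-- Quantitative positivity (ψ-irreducibility) bound for the coupled Independence
Metropolis–Hastings kernel: the joint kernel is bounded below by a positive multiple
of the reference mass of the diagonal slice of `B` restricted to `K`. -/
theorem coupled_kernel_irreducibility_bound {X : Type*} [MeasurableSpace X]
    (μ : Measure X) [IsProbabilityMeasure μ]
    (Q π₀ π₁ : X → ℝ) (hQmeas : Measurable Q) (hπ₀meas : Measurable π₀)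
    (hπ₁meas : Measurable π₁)
    (hQpos : ∀ z, 0 < Q z) (hπ₀pos : ∀ z, 0 < π₀ z) (hπ₁pos : ∀ z, 0 < π₁ z)
    (hQint : ∫ z, Q z ∂μ = 1)
    (P : X → X → Set (X × X) → ℝ)
    (hP : ∀ (θ₀ θ₁ : X) (B : Set (X × X)), MeasurableSet B →
      P θ₀ θ₁ B ≥ ∫ z,
        min (min 1 ((Q θ₀ * π₀ z) / (Q z * π₀ θ₀)))
            (min 1 ((Q θ₁ * π₁ z) / (Q z * π₁ θ₁))) * Q z
          * Set.indicator {z : X | (z, z) ∈ B} (fun _ => (1:ℝ)) z ∂μ)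
    (ε ε' ε'' : ℝ) (hε : 0 < ε) (hε' : 0 < ε') (hε'' : 0 < ε'')
    (K : Set X) (hK : MeasurableSet K)
    (hQK : ∀ z ∈ K, ε ≤ Q z) (hπ₀K : ∀ z ∈ K, ε' ≤ π₀ z) (hπ₁K : ∀ z ∈ K, ε'' ≤ π₁ z) :
    ∀ (θ₀ θ₁ : X) (B : Set (X × X)), MeasurableSet B →
      0 < min ε (min (ε' * Q θ₀ / π₀ θ₀) (ε'' * Q θ₁ / π₁ θ₁)) ∧
      P θ₀ θ₁ B ≥ min ε (min (ε' * Q θ₀ / π₀ θ₀) (ε'' * Q θ₁ / π₁ θ₁))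
        * (μ (K ∩ {z : X | (z, z) ∈ B})).toReal :=
  coupled_kernel_irreducibility_bound_general μ Q π₀ π₁ hπ₀meas hπ₁meas hQpos hπ₀pos hπ₁pos hQint P
    hP ε ε' ε'' hε hε' hε'' K hQK hπ₀K hπ₁K
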